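/- KL inequality for classical Tikhonov regularization under a source condition on the difference: let μ > 0 and let (A*A)^μ denote the fractional power of the positive self-adjoint operator A*A given by the continuous functional calculus. Suppose x ∈ X and w ∈ X satisfy x − x_α = (A*A)^μ w with ‖w‖ ≤ 1, where x_α satisfies the normal equation A*A x_α + α x_α = A*A x†. Then (T_α(x) − T_α(x_α))^{(μ+1)/(2μ+1)} ≤ ‖A*(A x − A x†) + α x‖. -/

import Mathlib

open Filter Topology Set RealInnerProductSpace ContinuousLinearMap

/-!
With `e = x - x_α` and `g = A*(A x - A x†) + α x`, the normal equation gives `g = (A*A + α) e`,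
so `T_α(x) - T_α(x_α) = ⟪g, e⟫ / 2 ≤ ‖g‖ ‖e‖`. The moment inequality
`‖(A*A)^μ w‖ ≤ ‖w‖^{1/(μ+1)} ‖(A*A)^{μ+1} w‖^{μ/(μ+1)}` and `‖A*A e‖ ≤ ‖(A*A + α) e‖` give
`‖e‖ ≤ ‖g‖^{μ/(μ+1)}`, and `(1 + μ/(μ+1)) (μ+1)/(2μ+1) = 1`. The moment inequality is the
log-convexity of `t ↦ ⟪(A*A)^t w, w⟫`: Cauchy–Schwarz gives it at midpoints, hence at dyadic
points, and continuity extends it to all points.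
-/

theorem dyadic_mem_of_midpoint_mem {S : Set ℝ} (h0 : (0 : ℝ) ∈ S) (h1 : (1 : ℝ) ∈ S)
    (hmid : ∀ s ∈ S, ∀ t ∈ S, (s + t) / 2 ∈ S) :
    ∀ n k : ℕ, k ≤ 2 ^ n → (k : ℝ) / 2 ^ n ∈ S := by
  intro n
  induction n with
  | zero =>
    intro k hk
    interval_cases k <;> simpa
  | succ n ih =>
    intro k hk
    rw [pow_succ] at hk
    obtain ⟨m, rfl | rfl⟩ := Nat.even_or_odd' k
    · convert ih m (by omega) using 1
      push_cast
      rw [pow_succ]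
      field_simp
    · convert hmid _ (ih m (by omega)) _ (ih (m + 1) (by omega)) using 1
      push_cast
      rw [pow_succ]
      field_simp
      ring

theorem rpow_one_sub_mul_rpow_mul_eq_sq_midpoint {a b s t : ℝ} (ha : 0 ≤ a) (hb : 0 ≤ b)
    (hs : s ∈ Icc (0 : ℝ) 1) (ht : t ∈ Icc (0 : ℝ) 1) :
    a ^ (1 - s) * b ^ s * (a ^ (1 - t) * b ^ t) =
      (a ^ (1 - (s + t) / 2) * b ^ ((s + t) / 2)) ^ 2 := by
  have hsq : ∀ {c u v : ℝ}, 0 ≤ c → 0 ≤ u → 0 ≤ v → c ^ u * c ^ v = (c ^ ((u + v) / 2)) ^ 2 :=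
    fun hc hu hv => by
      rw [← Real.rpow_add_of_nonneg hc hu hv, ← Real.rpow_mul_natCast hc]
      norm_num
  have ha' := hsq ha (sub_nonneg.2 hs.2) (sub_nonneg.2 ht.2)
  have hb' := hsq hb hs.1 ht.1
  rw [show (1 - s + (1 - t)) / 2 = 1 - (s + t) / 2 by ring] at ha'
  rw [mul_pow, ← ha', ← hb']
  ring

theorem le_rpow_mul_rpow_of_midpoint_sq_le {f : ℝ → ℝ} (hf : ∀ t ∈ Icc (0 : ℝ) 1, 0 ≤ f t)
    (hmid : ∀ s ∈ Icc (0 : ℝ) 1, ∀ t ∈ Icc (0 : ℝ) 1, f ((s + t) / 2) ^ 2 ≤ f s * f t)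
    (hcont : ContinuousOn f (Ioo 0 1)) {c : ℝ} (hc : c ∈ Ioo (0 : ℝ) 1) :
    f c ≤ f 0 ^ (1 - c) * f 1 ^ c := by
  set R : ℝ → ℝ := fun t => f 0 ^ (1 - t) * f 1 ^ t with hR
  have hf0 := hf 0 (left_mem_Icc.2 zero_le_one)
  have hf1 := hf 1 (right_mem_Icc.2 zero_le_one)
  have hR_nonneg : ∀ t, 0 ≤ R t := fun t =>
    mul_nonneg (Real.rpow_nonneg hf0 _) (Real.rpow_nonneg hf1 _)
  have hdyadic := dyadic_mem_of_midpoint_mem (S := {t ∈ Icc (0 : ℝ) 1 | f t ≤ R t})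
    ⟨left_mem_Icc.2 zero_le_one, by simp [hR]⟩ ⟨right_mem_Icc.2 zero_le_one, by simp [hR]⟩ <| by
      rintro s ⟨hs, hfs⟩ t ⟨ht, hft⟩
      have hm : (s + t) / 2 ∈ Icc (0 : ℝ) 1 :=
        ⟨by linarith [hs.1, ht.1], by linarith [hs.2, ht.2]⟩
      refine ⟨hm, (pow_le_pow_iff_left₀ (hf _ hm) (hR_nonneg _) two_ne_zero).1 ?_⟩
      calc f ((s + t) / 2) ^ 2 ≤ f s * f t := hmid s hs t ht
        _ ≤ R s * R t := mul_le_mul hfs hft (hf t ht) (hR_nonneg s)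
        _ = R ((s + t) / 2) ^ 2 := rpow_one_sub_mul_rpow_mul_eq_sq_midpoint hf0 hf1 hs ht
  set q : ℕ → ℝ := fun n => (⌊c * 2 ^ n⌋₊ : ℝ) / 2 ^ n
  have hq : Tendsto q atTop (𝓝 c) :=
    (tendsto_nat_floor_mul_div_atTop hc.1.le).comp
      (tendsto_pow_atTop_atTop_of_one_lt one_lt_two)
  have hfq : ∀ n, f (q n) ≤ R (q n) := fun n =>
    (hdyadic n _ <| Nat.floor_le_of_le <| by
      push_cast
      nlinarith [hc.2, pow_pos (two_pos (α := ℝ)) n]).2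
  have hRc : ContinuousAt R c :=
    ((Real.continuousAt_const_rpow' (sub_ne_zero.2 hc.2.ne')).comp
      (continuousAt_const.sub continuousAt_id : ContinuousAt (fun t : ℝ => 1 - t) c)).mul
      (Real.continuousAt_const_rpow' hc.1.ne')
  exact le_of_tendsto_of_tendsto' ((hcont.continuousAt (Ioo_mem_nhds hc.1 hc.2)).tendsto.comp hq)
    (hRc.tendsto.comp hq) hfq

theorem ContinuousLinearMap.IsPositive.norm_apply_le_norm_apply_add_smul {E : Type*}
    [NormedAddCommGroup E] [InnerProductSpace ℝ E] {S : E →L[ℝ] E} (hS : S.IsPositive)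
    {α : ℝ} (hα : 0 ≤ α) (e : E) : ‖S e‖ ≤ ‖S e + α • e‖ := by
  refine (pow_le_pow_iff_left₀ (norm_nonneg _) (norm_nonneg _) two_ne_zero).1 ?_
  rw [norm_add_sq_real, real_inner_smul_right, real_inner_comm]
  linarith [mul_nonneg hα (hS.inner_nonneg_right e), sq_nonneg ‖α • e‖]

section OperatorFamily

variable {E : Type*} [NormedAddCommGroup E] [InnerProductSpace ℝ E] {P : ℝ → E →L[ℝ] E}

theorem inner_apply_apply_eq_inner_add
    (hadd : ∀ s t : ℝ, 0 ≤ s → 0 ≤ t → P (s + t) = (P s).comp (P t))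
    (hpos : ∀ t : ℝ, 0 ≤ t → (P t).IsPositive) {s t : ℝ} (hs : 0 ≤ s) (ht : 0 ≤ t) (w : E) :
    ⟪P s w, P t w⟫ = ⟪P (s + t) w, w⟫ := by
  rw [(hpos s hs).inner_left_eq_inner_right, ← ContinuousLinearMap.comp_apply, ← hadd s t hs ht,
    real_inner_comm]

theorem inner_apply_midpoint_sq_le
    (hadd : ∀ s t : ℝ, 0 ≤ s → 0 ≤ t → P (s + t) = (P s).comp (P t))
    (hpos : ∀ t : ℝ, 0 ≤ t → (P t).IsPositive) {a b : ℝ} (ha : 0 ≤ a) (hb : 0 ≤ b) (w : E) :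
    ⟪P ((a + b) / 2) w, w⟫ ^ 2 ≤ ⟪P a w, w⟫ * ⟪P b w, w⟫ := by
  have ha2 : 0 ≤ a / 2 := by positivity
  have hb2 : 0 ≤ b / 2 := by positivity
  have hcs := real_inner_mul_inner_self_le (P (a / 2) w) (P (b / 2) w)
  simp only [inner_apply_apply_eq_inner_add hadd hpos ha2 hb2,
    inner_apply_apply_eq_inner_add hadd hpos ha2 ha2,
    inner_apply_apply_eq_inner_add hadd hpos hb2 hb2, add_self_div_two, ← add_div] at hcs
  rwa [sq]

theorem norm_apply_le_norm_rpow_mul_norm_apply_rpow (hP0 : P 0 = 1)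
    (hadd : ∀ s t : ℝ, 0 ≤ s → 0 ≤ t → P (s + t) = (P s).comp (P t))
    (hpos : ∀ t : ℝ, 0 ≤ t → (P t).IsPositive) (hcont : ContinuousOn P (Ioi 0))
    {s t : ℝ} (hs : 0 < s) (hst : s < t) (w : E) :
    ‖P s w‖ ≤ ‖w‖ ^ (1 - s / t) * ‖P t w‖ ^ (s / t) := by
  have ht : 0 < t := hs.trans hst
  have hnorm_sq : ∀ {r : ℝ}, 0 ≤ r → ‖P r w‖ ^ 2 = ⟪P (2 * r) w, w⟫ := fun hr => by
    rw [← real_inner_self_eq_norm_sq, inner_apply_apply_eq_inner_add hadd hpos hr hr, two_mul]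
  set f : ℝ → ℝ := fun r => ⟪P (2 * t * r) w, w⟫ with hf
  have hf_nonneg : ∀ r ∈ Icc (0 : ℝ) 1, 0 ≤ f r := fun r hr =>
    (hpos _ (by have := hr.1; positivity)).inner_nonneg_left w
  have hf_mid : ∀ a ∈ Icc (0 : ℝ) 1, ∀ b ∈ Icc (0 : ℝ) 1, f ((a + b) / 2) ^ 2 ≤ f a * f b :=
    fun a ha b hb => by
      simpa only [hf, mul_div_assoc', mul_add] using
        inner_apply_midpoint_sq_le hadd hpos (a := 2 * t * a) (b := 2 * t * b)
          (by have := ha.1; positivity) (by have := hb.1; positivity) w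
  have hf_cont : ContinuousOn f (Ioo 0 1) :=
    ((hcont.comp (continuousOn_const.mul continuousOn_id) fun r hr =>
      mul_pos (by positivity) hr.1).clm_apply continuousOn_const).inner continuousOn_const
  have hinterp := le_rpow_mul_rpow_of_midpoint_sq_le hf_nonneg hf_mid hf_cont
    (c := s / t) ⟨div_pos hs ht, (div_lt_one ht).2 hst⟩
  simp only [hf, mul_zero, mul_one] at hinterp
  rw [show 2 * t * (s / t) = 2 * s by field_simp] at hinterp
  simp only [hP0, one_apply_eq_self,
    real_inner_self_eq_norm_sq, ← hnorm_sq ht.le, ← hnorm_sq hs.le] at hinterp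
  refine (pow_le_pow_iff_left₀ (norm_nonneg _) (by positivity) two_ne_zero).1 ?_
  rwa [mul_pow, Real.rpow_pow_comm (norm_nonneg _), Real.rpow_pow_comm (norm_nonneg _)]

theorem norm_apply_le_norm_apply_add_smul_rpow (hP0 : P 0 = 1)
    (hadd : ∀ s t : ℝ, 0 ≤ s → 0 ≤ t → P (s + t) = (P s).comp (P t))
    (hpos : ∀ t : ℝ, 0 ≤ t → (P t).IsPositive) (hcont : ContinuousOn P (Ioi 0))
    {μ α : ℝ} (hμ : 0 < μ) (hα : 0 ≤ α) {w : E} (hw : ‖w‖ ≤ 1) :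
    ‖P μ w‖ ≤ ‖P 1 (P μ w) + α • P μ w‖ ^ (μ / (μ + 1)) := by
  have hP1 : P 1 (P μ w) = P (μ + 1) w := by
    rw [add_comm, hadd 1 μ zero_le_one hμ.le]
    rfl
  calc ‖P μ w‖ ≤ ‖w‖ ^ (1 - μ / (μ + 1)) * ‖P (μ + 1) w‖ ^ (μ / (μ + 1)) :=
        norm_apply_le_norm_rpow_mul_norm_apply_rpow hP0 hadd hpos hcont hμ (lt_add_one μ) w
    _ ≤ 1 * ‖P 1 (P μ w) + α • P μ w‖ ^ (μ / (μ + 1)) := by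
        refine mul_le_mul (Real.rpow_le_one (norm_nonneg _) hw ?_)
          (Real.rpow_le_rpow (norm_nonneg _) ?_ (by positivity)) (by positivity) zero_le_one
        · rw [sub_nonneg, div_le_one (by positivity)]
          linarith
        · rw [← hP1]
          exact (hpos 1 zero_le_one).norm_apply_le_norm_apply_add_smul hα _
    _ = ‖P 1 (P μ w) + α • P μ w‖ ^ (μ / (μ + 1)) := one_mul _

end OperatorFamily

section Tikhonov

variable {X Y : Type*} [NormedAddCommGroup X] [InnerProductSpace ℝ X]
  [NormedAddCommGroup Y] [InnerProductSpace ℝ Y]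

noncomputable def tikhonov (A : X →L[ℝ] Y) (y : Y) (α : ℝ) (x : X) : ℝ :=
  (1 / 2) * ‖A x - y‖ ^ 2 + (α / 2) * ‖x‖ ^ 2

variable [CompleteSpace X] [CompleteSpace Y] {A : X →L[ℝ] Y}

theorem inner_adjoint_apply_add_smul_self (α : ℝ) (e : X) :
    ⟪adjoint A (A e) + α • e, e⟫ = ‖A e‖ ^ 2 + α * ‖e‖ ^ 2 := by
  rw [inner_add_left, real_inner_smul_left, ContinuousLinearMap.adjoint_inner_left,
    real_inner_self_eq_norm_sq, real_inner_self_eq_norm_sq]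

variable {xdag xa : X} {α : ℝ}

theorem adjoint_sub_add_smul_eq_of_normal
    (hnormal : adjoint A (A xa) + α • xa = adjoint A (A xdag)) (x : X) :
    adjoint A (A x - A xdag) + α • x = adjoint A (A (x - xa)) + α • (x - xa) := by
  rw [map_sub, map_sub, map_sub, smul_sub, ← hnormal]
  abel

theorem tikhonov_sub_tikhonov_of_normal
    (hnormal : adjoint A (A xa) + α • xa = adjoint A (A xdag)) (x : X) :
    tikhonov A (A xdag) α x - tikhonov A (A xdag) α xa =
      (‖A (x - xa)‖ ^ 2 + α * ‖x - xa‖ ^ 2) / 2 := by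
  have hgrad : adjoint A (A xa - A xdag) + α • xa = 0 := by
    rw [map_sub, ← hnormal]
    abel
  obtain ⟨e, rfl⟩ : ∃ e, x = e + xa := ⟨x - xa, (sub_add_cancel x xa).symm⟩
  have hcross : ⟪A e, A xa - A xdag⟫ + α * ⟪e, xa⟫ = 0 := by
    rw [← ContinuousLinearMap.adjoint_inner_right, ← real_inner_smul_right, ← inner_add_right,
      hgrad, inner_zero_right]
  simp only [tikhonov, add_sub_cancel_right, map_add]
  rw [add_sub_assoc (A e), norm_add_sq_real, norm_add_sq_real]
  linarith

theorem tikhonov_sub_tikhonov_rpow_le_norm_of_normal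
    (hnormal : adjoint A (A xa) + α • xa = adjoint A (A xdag)) (hα : 0 ≤ α) {c : ℝ}
    (hc : 0 ≤ c) {x : X} (he : ‖x - xa‖ ≤ ‖adjoint A (A x - A xdag) + α • x‖ ^ c) :
    (tikhonov A (A xdag) α x - tikhonov A (A xdag) α xa) ^ (1 + c)⁻¹ ≤
      ‖adjoint A (A x - A xdag) + α • x‖ := by
  set g := adjoint A (A x - A xdag) + α • x with hg
  have hinner : ⟪g, x - xa⟫ = ‖A (x - xa)‖ ^ 2 + α * ‖x - xa‖ ^ 2 := by
    rw [hg, adjoint_sub_add_smul_eq_of_normal hnormal, inner_adjoint_apply_add_smul_self]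
  rw [tikhonov_sub_tikhonov_of_normal hnormal]
  calc ((‖A (x - xa)‖ ^ 2 + α * ‖x - xa‖ ^ 2) / 2) ^ (1 + c)⁻¹
      ≤ (‖g‖ ^ (1 + c)) ^ (1 + c)⁻¹ := by
        refine Real.rpow_le_rpow (by positivity) ?_ (by positivity)
        calc (‖A (x - xa)‖ ^ 2 + α * ‖x - xa‖ ^ 2) / 2
            ≤ ‖A (x - xa)‖ ^ 2 + α * ‖x - xa‖ ^ 2 := half_le_self (by positivity)
          _ = ⟪g, x - xa⟫ := hinner.symm
          _ ≤ ‖g‖ * ‖x - xa‖ := real_inner_le_norm _ _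
          _ ≤ ‖g‖ * ‖g‖ ^ c := mul_le_mul_of_nonneg_left he (norm_nonneg _)
          _ = ‖g‖ ^ (1 + c) := (Real.rpow_one_add' (norm_nonneg _) (by positivity)).symm
    _ = ‖g‖ := Real.rpow_rpow_inv (norm_nonneg _) (by positivity)

end Tikhonov

/-- KL inequality for classical Tikhonov regularization under a source condition on the
difference. The family `fpow : ℝ → (X →L[ℝ] X)` stands for the fractional powers
`μ ↦ (A*A)^μ` of the positive self-adjoint operator `A*A` given by the continuous
functional calculus; it is characterized (uniquely) by the listed properties:
`(A*A)^0 = 1`, `(A*A)^1 = A*A`, the semigroup law `(A*A)^{μ+ν} = (A*A)^μ (A*A)^ν` for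
`μ, ν ≥ 0`, positivity (hence self-adjointness) of each `(A*A)^μ`, and norm-continuity of
`μ ↦ (A*A)^μ` on `(0,∞)`. If `x − x_α = (A*A)^μ w` with `‖w‖ ≤ 1`, where `x_α` solves the
normal equation `A*A x_α + α x_α = A*A x†`, then
`(T_α(x) − T_α(x_α))^{(μ+1)/(2μ+1)} ≤ ‖A*(A x − A x†) + α x‖`. -/
theorem stmt19 {X Y : Type*} [NormedAddCommGroup X] [InnerProductSpace ℝ X]
    [CompleteSpace X] [NormedAddCommGroup Y] [InnerProductSpace ℝ Y] [CompleteSpace Y]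
    (A : X →L[ℝ] Y) (xdag : X) (α : ℝ) (hα : 0 < α)
    (T : X → ℝ) (hT : ∀ x, T x = (1 / 2) * ‖A x - A xdag‖ ^ 2 + (α / 2) * ‖x‖ ^ 2)
    (xa : X)
    (hnormal : (ContinuousLinearMap.adjoint A) (A xa) + α • xa =
      (ContinuousLinearMap.adjoint A) (A xdag))
    (fpow : ℝ → X →L[ℝ] X)
    (hf0 : fpow 0 = 1)
    (hf1 : fpow 1 = (ContinuousLinearMap.adjoint A).comp A)
    (hfadd : ∀ μ ν : ℝ, 0 ≤ μ → 0 ≤ ν → fpow (μ + ν) = (fpow μ).comp (fpow ν))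
    (hfpos : ∀ μ : ℝ, 0 ≤ μ → (fpow μ).IsPositive)
    (hfcont : ContinuousOn fpow (Set.Ioi 0))
    (μ : ℝ) (hμ : 0 < μ)
    (x w : X) (hw : ‖w‖ ≤ 1) (hxw : x - xa = fpow μ w) :
    (T x - T xa) ^ ((μ + 1) / (2 * μ + 1)) ≤
      ‖(ContinuousLinearMap.adjoint A) (A x - A xdag) + α • x‖ := by
  obtain rfl : T = tikhonov A (A xdag) α := funext hT
  have he := norm_apply_le_norm_apply_add_smul_rpow hf0 hfadd hfpos hfcont hμ hα.le hw
  rw [hf1, comp_apply, ← hxw, ← adjoint_sub_add_smul_eq_of_normal hnormal x] at he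
  rw [show (μ + 1) / (2 * μ + 1) = (1 + μ / (μ + 1))⁻¹ by field_simp; ring]
  exact tikhonov_sub_tikhonov_rpow_le_norm_of_normal hnormal hα.le (by positivity) he
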